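/- Let ε > 0, let S ⊆ ℝ² be a nonempty finite set whose diameter is at most 2ε, and let K ⊆ ℝ² be a nonempty compact convex set such that a ball of radius ε slides freely inside K. Then V₂(conv(S) ⊕ K) − V₂(S ⊕ K) ≤ V₂(conv(S) ⊕ B(ε)) − V₂(S ⊕ B(ε)), where conv(S) denotes the convex hull of S. -/

import Mathlib

open Pointwise MeasureTheory Metric

noncomputable section

/-- The plane `ℝ²`. -/
abbrev E2 := EuclideanSpace ℝ (Fin 2)

/-- `V₂`: Lebesgue measure (area) of a subset of `ℝ²`, as a real number. -/
def V2 (A : Set E2) : ℝ := (volume A).toReal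

/-- A ball of radius `ε` slides freely inside `K` if every boundary point of `K`
is contained in a closed ball of radius `ε` that is contained in `K`. -/
def SlidesFreely (ε : ℝ) (K : Set E2) : Prop :=
  ∀ x ∈ frontier K, ∃ c : E2, x ∈ closedBall c ε ∧ closedBall c ε ⊆ K

/-
Write `C = conv S`, `A = S ⊕ B(ε)`, `B = C ⊕ B(ε)`. A freely sliding `ε`-ball gives
`K = L ⊕ B(ε)` with `L = K ⊖ B(ε)` compact and convex, so the claim is
`V₂(B ⊕ L) - V₂(A ⊕ L) ≤ V₂(B) - V₂(A)`, i.e. `V₂((B ⊕ L) \ (A ⊕ L)) ≤ V₂(B \ A)`.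
Since `diam S ≤ 2ε`, every edge of the polygon `C` is covered by the discs at its ends: `∂C ⊆ A`.
Let `x ∈ (B ⊕ L) \ (A ⊕ L)`, so that `x - L` misses `A`. If `x - L` meets `C` it cannot cross
`∂C ⊆ A`, hence `x - L ⊆ C` and `x - τ ∈ C \ A` for a fixed `τ ∈ L`. Otherwise the convex slice
`(x - L) ∩ B` lies in `B \ (C ∪ A)`, where the outer normal of `C` takes finitely many values
(normals of edges), so it is a constant `u` there; the point of `x - L` minimising `⟪·, u⟫` is then
still in `B`, i.e. `x - τ(u) ∈ B \ A` has normal `u`, where `τ(u)` is the support point of `L` in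
direction `u`. Thus `(B ⊕ L) \ (A ⊕ L)` is covered by translates of the disjoint pieces of `B \ A`
on which the outer normal is constant (`0` on `C`), up to the null boundary of the convex `B ⊕ L`.
-/

open Set RealInnerProductSpace

theorem IsPreconnected.inter_frontier_nonempty {X : Type*} [TopologicalSpace X] {s t : Set X}
    (hs : IsPreconnected s) (hst : (s ∩ t).Nonempty) (hst' : (s \ t).Nonempty) :
    (s ∩ frontier t).Nonempty := by
  by_contra h
  have hcover : s ⊆ interior t ∪ (closure t)ᶜ := fun x hx => by
    by_cases hxc : x ∈ closure t
    · exact Or.inl (by_contra fun hxi => h ⟨x, hx, hxc, hxi⟩)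
    · exact Or.inr hxc
  obtain ⟨x, -, hxi, hxc⟩ := hs _ _ isOpen_interior isClosed_closure.isOpen_compl hcover
    (hst.mono fun x hx => ⟨hx.1, (hcover hx.1).resolve_right (· (subset_closure hx.2))⟩)
    (hst'.mono fun x hx => ⟨hx.1, (hcover hx.1).resolve_left (hx.2 <| interior_subset ·)⟩)
  exact hxc (interior_subset_closure hxi)

section NearestPoint

variable {E : Type*} [NormedAddCommGroup E] [InnerProductSpace ℝ E] {C : Set E}

open Classical in
/-- The metric projection onto `C`, with junk value `y` when `y` has no nearest point in `C`. -/
def nearestPt (C : Set E) (y : E) : E :=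
  if h : ∃ p ∈ C, ‖y - p‖ = ⨅ c : C, ‖y - c‖ then h.choose else y

theorem nearestPt_spec (hne : C.Nonempty) (hC : IsComplete C) (hco : Convex ℝ C) (y : E) :
    nearestPt C y ∈ C ∧ ‖y - nearestPt C y‖ = ⨅ c : C, ‖y - c‖ := by
  have h := exists_norm_eq_iInf_of_complete_convex hne hC hco y
  rw [nearestPt, dif_pos h]
  exact h.choose_spec

theorem nearestPt_mem (hne : C.Nonempty) (hC : IsComplete C) (hco : Convex ℝ C) (y : E) :
    nearestPt C y ∈ C :=
  (nearestPt_spec hne hC hco y).1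

theorem inner_sub_nearestPt_le (hne : C.Nonempty) (hC : IsComplete C) (hco : Convex ℝ C) (y : E)
    {c : E} (hc : c ∈ C) : ⟪y - nearestPt C y, c - nearestPt C y⟫ ≤ 0 :=
  (norm_eq_iInf_iff_real_inner_le_zero hco (nearestPt_mem hne hC hco y)).1
    (nearestPt_spec hne hC hco y).2 c hc

theorem norm_sub_nearestPt_le (hne : C.Nonempty) (hC : IsComplete C) (hco : Convex ℝ C) (y : E)
    {c : E} (hc : c ∈ C) : ‖y - nearestPt C y‖ ≤ ‖y - c‖ := by
  rw [(nearestPt_spec hne hC hco y).2]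
  exact ciInf_le ⟨0, by rintro _ ⟨w, rfl⟩; positivity⟩ (⟨c, hc⟩ : C)

theorem nearestPt_eq_self (hne : C.Nonempty) (hC : IsComplete C) (hco : Convex ℝ C) {y : E}
    (hy : y ∈ C) : nearestPt C y = y := by
  have h := norm_sub_nearestPt_le hne hC hco y hy
  rw [sub_self, norm_zero, norm_le_zero_iff, sub_eq_zero] at h
  exact h.symm

theorem lipschitzWith_nearestPt (hne : C.Nonempty) (hC : IsComplete C) (hco : Convex ℝ C) :
    LipschitzWith 1 (nearestPt C) := by
  refine LipschitzWith.of_dist_le_mul fun y z => ?_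
  rw [NNReal.coe_one, one_mul, dist_eq_norm, dist_eq_norm]
  set a := nearestPt C y
  set b := nearestPt C z
  have h₁ := inner_sub_nearestPt_le hne hC hco y (nearestPt_mem hne hC hco z)
  have h₂ := inner_sub_nearestPt_le hne hC hco z (nearestPt_mem hne hC hco y)
  -- the sum of the two variational inequalities
  have key : ‖a - b‖ ^ 2 ≤ ⟪y - z, a - b⟫ := by
    rw [← real_inner_self_eq_norm_sq]
    simp only [inner_sub_left, inner_sub_right] at h₁ h₂ ⊢
    linarith [real_inner_comm a b, real_inner_comm y b, real_inner_comm z a]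
  nlinarith [real_inner_le_norm (y - z) (a - b), norm_nonneg (a - b), norm_nonneg (y - z)]

theorem continuous_nearestPt (hne : C.Nonempty) (hC : IsComplete C) (hco : Convex ℝ C) :
    Continuous (nearestPt C) :=
  (lipschitzWith_nearestPt hne hC hco).continuous

theorem mem_add_closedBall_iff_norm_sub_nearestPt_le (hne : C.Nonempty) (hC : IsComplete C)
    (hco : Convex ℝ C) {r : ℝ} {y : E} : y ∈ C + closedBall 0 r ↔ ‖y - nearestPt C y‖ ≤ r := by
  constructor
  · rintro ⟨c, hc, e, he, rfl⟩
    refine (norm_sub_nearestPt_le hne hC hco _ hc).trans ?_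
    simpa using he
  · exact fun h => ⟨_, nearestPt_mem hne hC hco y, _, by simpa using h, add_sub_cancel _ _⟩

theorem mem_add_ball_iff_norm_sub_nearestPt_lt (hne : C.Nonempty) (hC : IsComplete C)
    (hco : Convex ℝ C) {r : ℝ} {y : E} : y ∈ C + ball 0 r ↔ ‖y - nearestPt C y‖ < r := by
  constructor
  · rintro ⟨c, hc, e, he, rfl⟩
    refine (norm_sub_nearestPt_le hne hC hco _ hc).trans_lt ?_
    simpa using he
  · exact fun h => ⟨_, nearestPt_mem hne hC hco y, _, by simpa using h, add_sub_cancel _ _⟩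

end NearestPoint

section OuterNormal

variable {E : Type*} [NormedAddCommGroup E] [InnerProductSpace ℝ E] {C : Set E}

/-- The unit outer normal of `C` at `nearestPt C y`; it is `0` for `y ∈ C`. -/
def outerNormal (C : Set E) (y : E) : E :=
  ‖y - nearestPt C y‖⁻¹ • (y - nearestPt C y)

theorem norm_outerNormal_le_one (C : Set E) (y : E) : ‖outerNormal C y‖ ≤ 1 := by
  rw [outerNormal, norm_smul, norm_inv, norm_norm]
  exact inv_mul_le_one_of_le₀ le_rfl (norm_nonneg _)

theorem norm_outerNormal (hne : C.Nonempty) (hC : IsComplete C) (hco : Convex ℝ C) {y : E}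
    (hy : y ∉ C) : ‖outerNormal C y‖ = 1 := by
  have h : y - nearestPt C y ≠ 0 := sub_ne_zero.2 fun h => hy (h ▸ nearestPt_mem hne hC hco y)
  rw [outerNormal, norm_smul, norm_inv, norm_norm, inv_mul_cancel₀ (norm_ne_zero_iff.2 h)]

theorem outerNormal_of_mem (hne : C.Nonempty) (hC : IsComplete C) (hco : Convex ℝ C) {y : E}
    (hy : y ∈ C) : outerNormal C y = 0 := by
  rw [outerNormal, nearestPt_eq_self hne hC hco hy, sub_self, smul_zero]

theorem inner_outerNormal_le (hne : C.Nonempty) (hC : IsComplete C) (hco : Convex ℝ C) (y : E)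
    {c : E} (hc : c ∈ C) : ⟪c, outerNormal C y⟫ ≤ ⟪nearestPt C y, outerNormal C y⟫ := by
  have h := inner_sub_nearestPt_le hne hC hco y hc
  rw [← sub_nonpos, ← inner_sub_left, outerNormal, real_inner_smul_right, real_inner_comm]
  exact mul_nonpos_of_nonneg_of_nonpos (by positivity) h

theorem inner_self_outerNormal (C : Set E) (y : E) :
    ⟪y, outerNormal C y⟫ = ⟪nearestPt C y, outerNormal C y⟫ + ‖y - nearestPt C y‖ := by
  rw [← sub_eq_iff_eq_add', ← inner_sub_left, outerNormal, real_inner_smul_right,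
    real_inner_self_eq_norm_sq, sq, inv_mul_eq_div, mul_self_div_self]

theorem continuousOn_outerNormal (hne : C.Nonempty) (hC : IsComplete C) (hco : Convex ℝ C) :
    ContinuousOn (outerNormal C) Cᶜ := by
  have hp := continuous_nearestPt hne hC hco
  refine ContinuousOn.smul (ContinuousOn.inv₀ (by fun_prop) fun y hy => ?_) (by fun_prop)
  exact norm_ne_zero_iff.2 (sub_ne_zero.2 fun h => hy (h ▸ nearestPt_mem hne hC hco y))

theorem measurable_outerNormal [MeasurableSpace E] [BorelSpace E] [FiniteDimensional ℝ E]
    (hne : C.Nonempty) (hC : IsComplete C) (hco : Convex ℝ C) : Measurable (outerNormal C) := by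
  have hp := (continuous_nearestPt hne hC hco).measurable
  unfold outerNormal
  fun_prop

theorem exists_norm_eq_one_inner_le_of_mem_frontier [FiniteDimensional ℝ E] (hC : IsClosed C)
    (hco : Convex ℝ C) {z : E} (hz : z ∈ frontier C) :
    ∃ u : E, ‖u‖ = 1 ∧ ∀ c ∈ C, ⟪c, u⟫ ≤ ⟪z, u⟫ := by
  have hzC : z ∈ C := hC.frontier_subset hz
  have hne : C.Nonempty := ⟨z, hzC⟩
  have hcomp := hC.isComplete
  -- the outer normals at points `x n ∉ C` converging to `z` have a convergent subsequence
  obtain ⟨x, hxC, hxz⟩ :=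
    mem_closure_iff_seq_limit.1 (frontier_eq_closure_inter_closure.subset hz).2
  have hsph : ∀ n, outerNormal C (x n) ∈ sphere (0 : E) 1 := fun n => by
    rw [mem_sphere_zero_iff_norm]; exact norm_outerNormal hne hcomp hco (hxC n)
  obtain ⟨u, hu, φ, hφ, hlim⟩ := (isCompact_sphere (0 : E) 1).tendsto_subseq hsph
  refine ⟨u, mem_sphere_zero_iff_norm.1 hu, fun c hc => ?_⟩
  have hpz : Filter.Tendsto (fun n => nearestPt C (x (φ n))) Filter.atTop (nhds z) := by
    have h := ((continuous_nearestPt hne hcomp hco).tendsto z).comp (hxz.comp hφ.tendsto_atTop)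
    rwa [nearestPt_eq_self hne hcomp hco hzC] at h
  exact le_of_tendsto_of_tendsto' (tendsto_const_nhds.inner hlim) (hpz.inner hlim)
    fun n => inner_outerNormal_le hne hcomp hco _ hc

end OuterNormal

section HalfSpace

variable {E : Type*} [NormedAddCommGroup E] [InnerProductSpace ℝ E]

theorem inner_add_le_of_closedBall_subset {a u : E} {r h : ℝ} (hu : ‖u‖ = 1) (hr : 0 ≤ r)
    (hB : closedBall a r ⊆ {w | ⟪w, u⟫ ≤ h}) : ⟪a, u⟫ + r ≤ h := by
  have hmem : a + r • u ∈ closedBall a r := by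
    rw [mem_closedBall_iff_norm, add_sub_cancel_left, norm_smul, hu, mul_one,
      Real.norm_of_nonneg hr]
  have h' : ⟪a + r • u, u⟫ ≤ h := hB hmem
  rwa [inner_add_left, real_inner_smul_left, real_inner_self_eq_norm_sq, hu, one_pow, mul_one] at h'

theorem inner_lt_of_mem_interior {B : Set E} {q u : E} {h : ℝ} (hu : ‖u‖ = 1)
    (hB : B ⊆ {w | ⟪w, u⟫ ≤ h}) (hq : q ∈ interior B) : ⟪q, u⟫ < h := by
  obtain ⟨δ, hδ, hball⟩ := Metric.mem_nhds_iff.1 (mem_interior_iff_mem_nhds.1 hq)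
  have := inner_add_le_of_closedBall_subset hu (half_pos hδ).le
    ((closedBall_subset_ball (half_lt_self hδ)).trans (hball.trans hB))
  linarith

theorem eq_sub_smul_of_closedBall_subset {a u y : E} {r : ℝ} (hu : ‖u‖ = 1) (hr : 0 ≤ r)
    (hy : y ∈ closedBall a r) (hB : closedBall a r ⊆ {w | ⟪w, u⟫ ≤ ⟪y, u⟫}) : a = y - r • u := by
  have h₁ := inner_add_le_of_closedBall_subset hu hr hB
  have h₂ : ‖y - a‖ ≤ r := by rwa [mem_closedBall_iff_norm] at hy
  have h₃ : ‖y - a - r • u‖ ^ 2 ≤ 0 := by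
    rw [norm_sub_sq_real, real_inner_smul_right, norm_smul, hu, mul_one, Real.norm_of_nonneg hr,
      inner_sub_left]
    nlinarith [norm_nonneg (y - a)]
  have h₄ : y - a - r • u = 0 :=
    norm_eq_zero.1 (pow_eq_zero_iff two_ne_zero |>.1 (le_antisymm h₃ (by positivity)))
  linear_combination (norm := module) -h₄

end HalfSpace

section ConvexHull

variable {E : Type*} [NormedAddCommGroup E] [InnerProductSpace ℝ E]

theorem mem_convexHull_setOf_inner_eq {S : Set E} {p u : E} (hp : p ∈ convexHull ℝ S)
    (hS : ∀ s ∈ S, ⟪s, u⟫ ≤ ⟪p, u⟫) : p ∈ convexHull ℝ {s ∈ S | ⟪s, u⟫ = ⟪p, u⟫} := by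
  have hlin : IsLinearMap ℝ fun x : E => ⟪x, u⟫ :=
    ⟨fun x y => inner_add_left x y u, fun a x => real_inner_smul_left x u a⟩
  set S₁ := {s ∈ S | ⟪s, u⟫ = ⟪p, u⟫}
  set S₂ := {s ∈ S | ⟪s, u⟫ < ⟪p, u⟫}
  have hS₁₂ : S = S₁ ∪ S₂ := Set.ext fun s =>
    ⟨fun hs => (hS s hs).eq_or_lt.imp (⟨hs, ·⟩) (⟨hs, ·⟩), by rintro (h | h) <;> exact h.1⟩
  have h₁ : convexHull ℝ S₁ ⊆ {x | ⟪x, u⟫ = ⟪p, u⟫} :=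
    convexHull_min (fun s hs => hs.2) (convex_hyperplane hlin _)
  have h₂ : convexHull ℝ S₂ ⊆ {x | ⟪x, u⟫ < ⟪p, u⟫} :=
    convexHull_min (fun s hs => hs.2) (convex_halfSpace_lt hlin _)
  rcases S₂.eq_empty_or_nonempty with hS₂ | hS₂
  · rwa [hS₁₂, hS₂, union_empty] at hp
  rcases S₁.eq_empty_or_nonempty with hS₁ | hS₁
  · rw [hS₁₂, hS₁, empty_union] at hp
    exact absurd (h₂ hp) (by simp)
  rw [hS₁₂, convexHull_union hS₁ hS₂, mem_convexJoin] at hp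
  obtain ⟨a, ha, b, hb, hpab⟩ := hp
  rw [segment_eq_image'] at hpab
  obtain ⟨θ, -, hθ⟩ := hpab
  have ha' : ⟪a, u⟫ = ⟪p, u⟫ := h₁ ha
  have hb' : ⟪b, u⟫ < ⟪p, u⟫ := h₂ hb
  have hθ0 : θ = 0 := by
    have e := congrArg (⟪·, u⟫) hθ
    simp only [inner_add_left, real_inner_smul_left, inner_sub_left] at e
    rw [ha'] at e
    have : θ * (⟪b, u⟫ - ⟪p, u⟫) = 0 := by linarith
    exact (mul_eq_zero.1 this).resolve_right (sub_ne_zero.2 hb'.ne)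
  have hpa : p = a := by rw [← hθ, hθ0]; simp
  rwa [hpa]

end ConvexHull

section ParallelBody

variable {E : Type*} [NormedAddCommGroup E] [InnerProductSpace ℝ E] {C : Set E} {ε : ℝ}

theorem isClosed_add_closedBall (hne : C.Nonempty) (hC : IsComplete C) (hco : Convex ℝ C) :
    IsClosed (C + closedBall 0 ε) := by
  have hp := continuous_nearestPt hne hC hco
  rw [show C + closedBall 0 ε = {y | ‖y - nearestPt C y‖ ≤ ε} from
    Set.ext fun y => mem_add_closedBall_iff_norm_sub_nearestPt_le hne hC hco]
  exact isClosed_le (by fun_prop) continuous_const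

theorem inner_le_of_mem_frontier_add_closedBall (hne : C.Nonempty) (hC : IsComplete C)
    (hco : Convex ℝ C) {z w : E} (hz : z ∈ frontier (C + closedBall 0 ε))
    (hw : w ∈ C + closedBall 0 ε) : ⟪w, outerNormal C z⟫ ≤ ⟪z, outerNormal C z⟫ := by
  have hzε : ‖z - nearestPt C z‖ = ε := by
    refine le_antisymm ((mem_add_closedBall_iff_norm_sub_nearestPt_le hne hC hco).1
      ((isClosed_add_closedBall hne hC hco).frontier_subset hz)) (not_lt.1 fun h => hz.2 ?_)
    exact interior_maximal (add_subset_add_left ball_subset_closedBall) isOpen_ball.add_left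
      ((mem_add_ball_iff_norm_sub_nearestPt_lt hne hC hco).2 h)
  obtain ⟨c, hc, e, he, rfl⟩ := hw
  have he' : ⟪e, outerNormal C z⟫ ≤ ε := by
    have := norm_outerNormal_le_one C z
    have := mem_closedBall_zero_iff.1 he
    nlinarith [real_inner_le_norm e (outerNormal C z), norm_nonneg e,
      norm_nonneg (outerNormal C z)]
  rw [inner_add_left, inner_self_outerNormal, hzε]
  linarith [inner_outerNormal_le hne hC hco z hc]

/-- At a point `z` where `[q, y]` leaves `C ⊕ B(ε)`, the whole set lies in `{⟪·, u⟫ ≤ ⟪z, u⟫}`, so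
`⟪q, u⟫ < ⟪z, u⟫` for the interior point `q`, whereas `⟪z, u⟫ ≤ ⟪q, u⟫` since `⟪y, u⟫ ≤ ⟪q, u⟫`. -/
theorem mem_add_closedBall_of_segment (hne : C.Nonempty) (hC : IsComplete C) (hco : Convex ℝ C)
    {q y u : E} (hq : q ∈ interior (C + closedBall 0 ε)) (hyq : ⟪y, u⟫ ≤ ⟪q, u⟫)
    (hseg : ∀ z ∈ segment ℝ q y, z ∈ C + closedBall 0 ε → z ∉ C ∧ outerNormal C z = u) :
    y ∈ C + closedBall 0 ε := by
  by_contra hy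
  obtain ⟨z, hzs, hzB⟩ := (convex_segment q y).isPreconnected.inter_frontier_nonempty
    ⟨q, left_mem_segment ℝ q y, interior_subset hq⟩ ⟨y, right_mem_segment ℝ q y, hy⟩
  obtain ⟨hzC, hzu⟩ := hseg z hzs ((isClosed_add_closedBall hne hC hco).frontier_subset hzB)
  have hu : ‖u‖ = 1 := hzu ▸ norm_outerNormal hne hC hco hzC
  have hlt : ⟪q, u⟫ < ⟪z, u⟫ := inner_lt_of_mem_interior hu
    (fun w hw => hzu ▸ inner_le_of_mem_frontier_add_closedBall hne hC hco hzB hw) hq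
  have hle := ((innerₛₗ ℝ u).convexOn convex_univ).le_max_of_mem_segment trivial trivial hzs
  simp only [innerₛₗ_apply_apply] at hle
  rw [real_inner_comm z, real_inner_comm q, real_inner_comm y, max_eq_left hyq] at hle
  linarith

end ParallelBody

section Chords

variable {E : Type*} [NormedAddCommGroup E] [InnerProductSpace ℝ E]

def chordNormals (S : Set E) : Set E :=
  ⋃ s ∈ S, ⋃ s' ∈ S \ {s}, {u | ‖u‖ = 1 ∧ ⟪s - s', u⟫ = 0}

/-- The nearest point of `conv S` to `y` is not a point of `S` (else `y ∈ S ⊕ B(ε)`), so the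
supporting line orthogonal to the normal passes through two points of `S`. -/
theorem outerNormal_mem_chordNormals {S : Set E} (hS : S.Finite) (hSne : S.Nonempty) {ε : ℝ}
    {y : E} (hyB : y ∈ convexHull ℝ S + closedBall 0 ε) (hyC : y ∉ convexHull ℝ S)
    (hyA : y ∉ S + closedBall 0 ε) : outerNormal (convexHull ℝ S) y ∈ chordNormals S := by
  set C := convexHull ℝ S
  have hCne : C.Nonempty := hSne.mono (subset_convexHull ℝ S)
  have hC : IsComplete C := (hS.isCompact_convexHull (𝕜 := ℝ)).isComplete
  have hco : Convex ℝ C := convex_convexHull ℝ S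
  set p := nearestPt C y
  set u := outerNormal C y
  have hpF := mem_convexHull_setOf_inner_eq (nearestPt_mem hCne hC hco y)
    (fun s hs => inner_outerNormal_le hCne hC hco y (subset_convexHull ℝ S hs))
  obtain ⟨s, hs⟩ := convexHull_nonempty_iff.1 ⟨p, hpF⟩
  by_cases hpair : ∃ s' ∈ {s ∈ S | ⟪s, u⟫ = ⟪p, u⟫}, s' ≠ s
  · obtain ⟨s', hs', hne⟩ := hpair
    refine mem_iUnion₂.2 ⟨s, hs.1, mem_iUnion₂.2 ⟨s', ⟨hs'.1, hne⟩,
      norm_outerNormal hCne hC hco hyC, ?_⟩⟩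
    rw [inner_sub_left, hs.2, hs'.2, sub_self]
  · push Not at hpair
    have hps : p = s := by
      have hsub : {s ∈ S | ⟪s, u⟫ = ⟪p, u⟫} ⊆ {s} := fun s' hs' => hpair s' hs'
      simpa using convexHull_mono hsub hpF
    refine (hyA ⟨s, hs.1, y - s, ?_, add_sub_cancel _ _⟩).elim
    rw [mem_closedBall_zero_iff, ← hps]
    exact (mem_add_closedBall_iff_norm_sub_nearestPt_le hCne hC hco).1 hyB

end Chords

section Plane

def rot90 (u : E2) : E2 := !₂[-u 1, u 0]

theorem norm_rot90 (u : E2) : ‖rot90 u‖ = ‖u‖ := by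
  simp [rot90, EuclideanSpace.norm_eq, Fin.sum_univ_two, add_comm]

theorem eq_inner_smul_add_inner_rot90_smul {u : E2} (hu : ‖u‖ = 1) (v : E2) :
    v = ⟪v, u⟫ • u + ⟪v, rot90 u⟫ • rot90 u := by
  have h : u 0 ^ 2 + u 1 ^ 2 = 1 := by
    have := EuclideanSpace.norm_sq_eq u
    rw [hu, Fin.sum_univ_two] at this
    simpa [sq_abs] using this.symm
  ext i
  fin_cases i <;> simp [rot90, PiLp.inner_apply, Fin.sum_univ_two] <;>
    linear_combination (-(v _)) * h

theorem finite_setOf_norm_eq_one_inner_eq_zero {w : E2} (hw : w ≠ 0) :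
    {u : E2 | ‖u‖ = 1 ∧ ⟪w, u⟫ = 0}.Finite := by
  set v := ‖w‖⁻¹ • w
  have hv : ‖v‖ = 1 := norm_smul_inv_norm hw
  refine ((finite_singleton (-rot90 v)).insert (rot90 v)).subset fun u ⟨hu, huw⟩ => ?_
  have hu' : u = ⟪u, rot90 v⟫ • rot90 v := by
    conv_lhs => rw [eq_inner_smul_add_inner_rot90_smul hv u]
    rw [real_inner_smul_right, real_inner_comm, huw, mul_zero, zero_smul, zero_add]
  have ht : |⟪u, rot90 v⟫| = 1 := by
    rw [← hu, hu', norm_smul, norm_rot90, hv, mul_one, Real.norm_eq_abs, ← hu']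
  rcases abs_eq zero_le_one |>.1 ht with h | h
  · exact Or.inl (by rw [hu', h, one_smul])
  · exact Or.inr (by rw [hu', h, neg_one_smul]; rfl)

theorem Set.Finite.chordNormals {S : Set E2} (hS : S.Finite) : (chordNormals S).Finite :=
  hS.biUnion fun _ _ => hS.sdiff.biUnion fun _ hs' =>
    finite_setOf_norm_eq_one_inner_eq_zero (sub_ne_zero.2 (Ne.symm hs'.2))

/-- The boundary of the polygon `conv S` consists of edges of length at most `2ε`, each covered
by the discs of radius `ε` at its endpoints. -/
theorem frontier_convexHull_subset_add_closedBall {S : Set E2} {ε : ℝ} (hS : S.Finite)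
    (hdiam : diam S ≤ 2 * ε) : frontier (convexHull ℝ S) ⊆ S + closedBall 0 ε := by
  intro z hz
  have hC : IsClosed (convexHull ℝ S) := (hS.isCompact_convexHull (𝕜 := ℝ)).isClosed
  obtain ⟨u, hu, hsup⟩ :=
    exists_norm_eq_one_inner_le_of_mem_frontier hC (convex_convexHull ℝ S) hz
  have hzF := mem_convexHull_setOf_inner_eq (hC.frontier_subset hz)
    (fun s hs => hsup s (subset_convexHull ℝ S hs))
  set v := rot90 u
  have hrep : ∀ s ∈ {s ∈ S | ⟪s, u⟫ = ⟪z, u⟫}, s - z = ⟪s - z, v⟫ • v := fun s hs => by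
    conv_lhs => rw [eq_inner_smul_add_inner_rot90_smul hu (s - z)]
    rw [inner_sub_left, hs.2, sub_self, zero_smul, zero_add]
  have hnorm : ∀ t : ℝ, ‖t • v‖ = |t| := fun t => by
    rw [norm_smul, norm_rot90, hu, mul_one, Real.norm_eq_abs]
  -- points of `S` on the supporting line on either side of `z`
  obtain ⟨s₁, hs₁, h₁⟩ := ((innerₛₗ ℝ v).convexOn convex_univ).exists_ge_of_mem_convexHull
    (subset_univ _) hzF
  obtain ⟨s₂, hs₂, h₂⟩ := ((innerₛₗ ℝ v).concaveOn convex_univ).exists_le_of_mem_convexHull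
    (subset_univ _) hzF
  simp only [innerₛₗ_apply_apply] at h₁ h₂
  have e₁ := hrep s₁ hs₁
  have e₂ := hrep s₂ hs₂
  set t₁ := ⟪s₁ - z, v⟫
  set t₂ := ⟪s₂ - z, v⟫
  have ht₁ : 0 ≤ t₁ := by
    simp only [t₁, inner_sub_left]; linarith [real_inner_comm v z, real_inner_comm v s₁]
  have ht₂ : t₂ ≤ 0 := by
    simp only [t₂, inner_sub_left]; linarith [real_inner_comm v z, real_inner_comm v s₂]
  have hd : dist s₁ s₂ = t₁ - t₂ := by
    rw [dist_eq_norm, show s₁ - s₂ = (s₁ - z) - (s₂ - z) by abel, e₁, e₂, ← sub_smul, hnorm,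
      abs_of_nonneg (by linarith)]
  have hdS := dist_le_diam_of_mem hS.isBounded hs₁.1 hs₂.1
  rcases le_or_gt t₁ ε with h | h
  · refine ⟨s₁, hs₁.1, z - s₁, ?_, add_sub_cancel _ _⟩
    rwa [mem_closedBall_zero_iff, norm_sub_rev, e₁, hnorm, abs_of_nonneg ht₁]
  · refine ⟨s₂, hs₂.1, z - s₂, ?_, add_sub_cancel _ _⟩
    rw [mem_closedBall_zero_iff, norm_sub_rev, e₂, hnorm, abs_of_nonpos ht₂]
    linarith

end Plane

section InnerParallelBody

variable {E : Type*} [NormedAddCommGroup E] {K : Set E} {ε : ℝ}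

/-- The inner parallel body `K ⊖ B(ε)`. -/
def innerParallelBody (ε : ℝ) (K : Set E) : Set E := {c | closedBall c ε ⊆ K}

theorem innerParallelBody_eq_biInter (ε : ℝ) (K : Set E) :
    innerParallelBody ε K = ⋂ e ∈ closedBall (0 : E) ε, (fun c => e + c) ⁻¹' K := by
  ext c
  simp only [innerParallelBody, mem_ofPred_eq, mem_iInter, mem_preimage, mem_closedBall_zero_iff]
  refine ⟨fun h e he => h ?_, fun h w hw => ?_⟩
  · rwa [mem_closedBall_iff_norm, add_sub_cancel_right]
  · simpa using h (w - c) (mem_closedBall_iff_norm.1 hw)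

theorem Convex.innerParallelBody [NormedSpace ℝ E] (hK : Convex ℝ K) :
    Convex ℝ (innerParallelBody ε K) := by
  rw [innerParallelBody_eq_biInter]
  exact convex_iInter₂ fun e _ => hK.translate_preimage_right e

theorem IsClosed.innerParallelBody (hK : IsClosed K) : IsClosed (innerParallelBody ε K) := by
  rw [innerParallelBody_eq_biInter]
  exact isClosed_biInter fun e _ => hK.preimage (continuous_const_add e)

theorem IsCompact.innerParallelBody (hK : IsCompact K) (hε : 0 ≤ ε) :
    IsCompact (innerParallelBody ε K) :=
  hK.of_isClosed_subset hK.isClosed.innerParallelBody fun _ hc => hc (mem_closedBall_self hε)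

theorem innerParallelBody_add_closedBall_subset : innerParallelBody ε K + closedBall 0 ε ⊆ K := by
  rintro _ ⟨c, hc, e, he, rfl⟩
  exact hc (by rwa [mem_closedBall_iff_norm, add_sub_cancel_left, ← mem_closedBall_zero_iff])

theorem closedBall_infDist_frontier_subset [NormedSpace ℝ E] (hK : IsClosed K) {x : E}
    (hx : x ∈ K) : closedBall x (infDist x (frontier K)) ⊆ K := by
  rcases (infDist_nonneg (x := x) (s := frontier K)).eq_or_lt with hd | hd
  · rw [← hd, closedBall_zero]
    exact singleton_subset_iff.2 hx
  rw [← closure_ball x hd.ne', hK.closure_subset_iff]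
  intro w hw
  by_contra hwK
  obtain ⟨z, hz, hzK⟩ := (convex_ball x _).isPreconnected.inter_frontier_nonempty
    ⟨x, mem_ball_self hd, hx⟩ ⟨w, hw, hwK⟩
  rw [mem_ball, dist_comm] at hz
  exact (infDist_le_dist_of_mem hzK).not_gt hz

end InnerParallelBody

theorem innerParallelBody_nonempty {K : Set E2} {ε : ℝ} (hKne : K.Nonempty) (hKc : IsCompact K)
    (hsl : SlidesFreely ε K) : (innerParallelBody ε K).Nonempty := by
  obtain ⟨y, hy⟩ := nonempty_frontier_iff.2 ⟨hKne, hKc.ne_univ⟩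
  obtain ⟨c, -, hc⟩ := hsl y hy
  exact ⟨c, hc⟩

/-- A point `x` closer than `ε` to its nearest boundary point `y` lies in the sliding ball at `y`:
that ball and the ball about `x` through `y` are both tangent at `y` to a supporting line of `K`. -/
theorem eq_innerParallelBody_add_closedBall {K : Set E2} {ε : ℝ} (hε : 0 ≤ ε)
    (hKne : K.Nonempty) (hKc : IsCompact K) (hKco : Convex ℝ K) (hsl : SlidesFreely ε K) :
    K = innerParallelBody ε K + closedBall 0 ε := by
  refine Subset.antisymm (fun x hx => ?_) innerParallelBody_add_closedBall_subset
  have hball := closedBall_infDist_frontier_subset hKc.isClosed hx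
  set d := infDist x (frontier K)
  rcases le_or_gt ε d with h | h
  · exact ⟨x, (closedBall_subset_closedBall h).trans hball, 0, mem_closedBall_self hε, add_zero x⟩
  obtain ⟨y, hyF, hyd⟩ := (hKc.of_isClosed_subset isClosed_frontier hKc.isClosed.frontier_subset)
    |>.exists_infDist_eq_dist (nonempty_frontier_iff.2 ⟨hKne, hKc.ne_univ⟩) x
  obtain ⟨u, hu, hsup⟩ := exists_norm_eq_one_inner_le_of_mem_frontier hKc.isClosed hKco hyF
  obtain ⟨c, hyc, hc⟩ := hsl y hyF
  have hx' : x = y - d • u := eq_sub_smul_of_closedBall_subset hu infDist_nonneg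
    (by rw [mem_closedBall, dist_comm, ← hyd]) (hball.trans hsup)
  have hc' : c = y - ε • u := eq_sub_smul_of_closedBall_subset hu hε hyc (hc.trans hsup)
  refine ⟨c, hc, x - c, ?_, add_sub_cancel _ _⟩
  rw [mem_closedBall_zero_iff, hx', hc', show y - d • u - (y - ε • u) = (ε - d) • u by module,
    norm_smul, hu, mul_one, Real.norm_of_nonneg (by linarith)]
  linarith [infDist_nonneg (x := x) (s := frontier K)]

theorem measure_le_of_forall_exists_sub_mem_fiber {G X : Type*} [AddGroup G] [MeasurableSpace G]
    [MeasurableAdd G] (μ : Measure G) [μ.IsAddRightInvariant] [MeasurableSpace X]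
    [MeasurableSingletonClass X] {f : G → X} (hf : Measurable f) {D T : Set G}
    (hD : MeasurableSet D) {F : Finset X} {τ : X → G}
    (h : ∀ x ∈ T, ∃ u ∈ F, x - τ u ∈ D ∧ f (x - τ u) = u) : μ T ≤ μ D := by
  set Y : X → Set G := fun u => D ∩ f ⁻¹' {u}
  have hY : (F : Set X).PairwiseDisjoint Y := fun u _ v _ huv =>
    ((disjoint_singleton.2 huv).preimage f).mono inter_subset_right inter_subset_right
  calc μ T ≤ μ (⋃ u ∈ F, (· + -τ u) ⁻¹' Y u) := measure_mono fun x hx => by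
        obtain ⟨u, hu, hxD, hxf⟩ := h x hx
        exact mem_biUnion hu (by simpa [Y, ← sub_eq_add_neg] using ⟨hxD, hxf⟩)
    _ ≤ ∑ u ∈ F, μ ((· + -τ u) ⁻¹' Y u) := measure_biUnion_finset_le _ _
    _ = ∑ u ∈ F, μ (Y u) := by simp_rw [measure_preimage_add_right]
    _ = μ (⋃ u ∈ F, Y u) :=
        (measure_biUnion_finset hY fun u _ => hD.inter (hf (measurableSet_singleton u))).symm
    _ ≤ μ D := measure_mono (iUnion₂_subset fun _ _ => inter_subset_left)

theorem Convex.addHaar_add_le_addHaar_interior_add {E : Type*} [NormedAddCommGroup E]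
    [NormedSpace ℝ E] [MeasurableSpace E] [BorelSpace E] [FiniteDimensional ℝ E] (μ : Measure E)
    [μ.IsAddHaarMeasure] {B L : Set E} (hB : Convex ℝ B) (hBint : (interior B).Nonempty)
    (hL : Convex ℝ L) : μ (B + L) ≤ μ (interior B + L) := by
  have hsub : B + L ⊆ closure (interior B + L) := by
    rintro _ ⟨b, hb, l, hl, rfl⟩
    have hb' : b ∈ closure (interior B) := by
      rw [hB.closure_interior_eq_closure_of_nonempty_interior hBint]
      exact subset_closure hb
    exact map_mem_closure (f := (· + l)) (continuous_add_const l) hb' fun _ hb' =>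
      add_mem_add hb' hl
  calc μ (B + L) ≤ μ (interior B + L ∪ frontier (interior B + L)) := by
        rw [← closure_eq_self_union_frontier]; exact measure_mono hsub
    _ ≤ μ (interior B + L) + μ (frontier (interior B + L)) := measure_union_le _ _
    _ = μ (interior B + L) := by rw [(hB.interior.add hL).addHaar_frontier μ, add_zero]

section Core

variable {E : Type*} [NormedAddCommGroup E] [InnerProductSpace ℝ E] {C A L V : Set E} {ε : ℝ}

theorem sub_mem_of_frontier_subset (hfr : frontier C ⊆ A) (hL : Convex ℝ L) {x : E}
    (hx : x ∉ A + L) {l₁ l : E} (hl₁ : l₁ ∈ L) (h₁ : x - l₁ ∈ C) (hl : l ∈ L) : x - l ∈ C := by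
  by_contra h
  obtain ⟨_, ⟨_, ha, l₂, hl₂, rfl⟩, hz⟩ :=
    ((convex_singleton x).sub hL).isPreconnected.inter_frontier_nonempty
      ⟨x - l₁, sub_mem_sub rfl hl₁, h₁⟩ ⟨x - l, sub_mem_sub rfl hl, h⟩
  rw [mem_singleton_iff] at ha
  exact hx ⟨_, ha ▸ hfr hz, l₂, hl₂, sub_add_cancel x l₂⟩

theorem exists_sub_mem_fiber_outerNormal (hε : 0 ≤ ε) (hne : C.Nonempty) (hC : IsComplete C)
    (hco : Convex ℝ C) (hfr : frontier C ⊆ A) (hV : V.Finite)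
    (hν : MapsTo (outerNormal C) ((C + closedBall 0 ε) \ (C ∪ A)) V) (hL : Convex ℝ L)
    {τ : E → E} (hτL : ∀ u, τ u ∈ L) (hτ : ∀ u, ∀ l ∈ L, ⟪l, u⟫ ≤ ⟪τ u, u⟫) {x : E}
    (hxB : x ∈ interior (C + closedBall 0 ε) + L) (hxA : x ∉ A + L) :
    ∃ u ∈ insert 0 V, x - τ u ∈ (C + closedBall 0 ε) \ A ∧ outerNormal C (x - τ u) = u := by
  have hxA' : ∀ l ∈ L, x - l ∉ A := fun l hl h => hxA ⟨x - l, h, l, hl, sub_add_cancel x l⟩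
  obtain ⟨q, hq, l₀, hl₀, rfl⟩ := hxB
  by_cases hxC : ∃ l ∈ L, q + l₀ - l ∈ C
  · obtain ⟨l₁, hl₁, h₁⟩ := hxC
    have h := sub_mem_of_frontier_subset hfr hL hxA hl₁ h₁ (hτL 0)
    exact ⟨0, mem_insert _ _, ⟨⟨_, h, 0, mem_closedBall_self hε, add_zero _⟩, hxA' _ (hτL 0)⟩,
      outerNormal_of_mem hne hC hco h⟩
  push Not at hxC
  -- the slice `P` avoids `C ∪ A`, so the outer normal is constant on it
  set P := ({q + l₀} - L) ∩ (C + closedBall 0 ε)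
  have hPC : P ⊆ Cᶜ := by
    rintro _ ⟨⟨_, rfl, l, hl, rfl⟩, -⟩
    exact hxC l hl
  have hPV : MapsTo (outerNormal C) P V := by
    rintro _ ⟨⟨_, rfl, l, hl, rfl⟩, hB⟩
    exact hν ⟨hB, not_or.2 ⟨hxC l hl, hxA' l hl⟩⟩
  have hqP : q ∈ P := ⟨⟨_, rfl, l₀, hl₀, add_sub_cancel_right q l₀⟩, interior_subset hq⟩
  obtain ⟨u, huV, hu⟩ := (((convex_singleton _).sub hL).inter
    (hco.add (convex_closedBall 0 ε))).isPreconnected.eqOn_const_of_mapsTo hV.isDiscrete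
    ((continuousOn_outerNormal hne hC hco).mono hPC) hPV ⟨_, hPV hqP⟩
  have hyB : q + l₀ - τ u ∈ C + closedBall 0 ε := by
    refine mem_add_closedBall_of_segment (u := u) hne hC hco hq ?_ fun z hz hzB => ?_
    · have := hτ u l₀ hl₀
      rw [inner_sub_left, inner_add_left]
      linarith
    · have hzP : z ∈ P := ⟨((convex_singleton _).sub hL).segment_subset hqP.1
        (sub_mem_sub rfl (hτL u)) hz, hzB⟩
      exact ⟨hPC hzP, hu hzP⟩
  exact ⟨u, mem_insert_of_mem _ huV, ⟨hyB, hxA' _ (hτL u)⟩, hu ⟨sub_mem_sub rfl (hτL u), hyB⟩⟩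

theorem addHaar_add_add_le [FiniteDimensional ℝ E] [MeasurableSpace E] [BorelSpace E]
    (μ : Measure E) [μ.IsAddHaarMeasure] (hε : 0 < ε) (hne : C.Nonempty) (hCc : IsCompact C)
    (hco : Convex ℝ C) (hA : IsClosed A) (hAB : A ⊆ C + closedBall 0 ε) (hfr : frontier C ⊆ A)
    (hV : V.Finite) (hν : MapsTo (outerNormal C) ((C + closedBall 0 ε) \ (C ∪ A)) V)
    (hLne : L.Nonempty) (hLc : IsCompact L) (hL : Convex ℝ L) :
    μ (C + closedBall 0 ε + L) + μ A ≤ μ (A + L) + μ (C + closedBall 0 ε) := by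
  set B := C + closedBall 0 ε
  have hC := hCc.isComplete
  have hBint : (interior B).Nonempty :=
    (hne.add (nonempty_ball.2 hε)).mono
      (interior_maximal (add_subset_add_left ball_subset_closedBall) isOpen_ball.add_left)
  have hτ : ∀ u : E, ∃ t ∈ L, ∀ l ∈ L, ⟪l, u⟫ ≤ ⟪t, u⟫ := fun u => by
    obtain ⟨t, ht, hmax⟩ := hLc.exists_isMaxOn hLne
      (by fun_prop : Continuous fun l : E => ⟪l, u⟫).continuousOn
    exact ⟨t, ht, fun l hl => hmax hl⟩
  choose τ hτL hτ using hτ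
  have hcover : μ ((interior B + L) \ (A + L)) ≤ μ (B \ A) := by
    refine measure_le_of_forall_exists_sub_mem_fiber μ (measurable_outerNormal hne hC hco)
      ((isClosed_add_closedBall hne hC hco).measurableSet.diff hA.measurableSet)
      (F := (hV.insert 0).toFinset) (τ := τ) fun x hx => ?_
    obtain ⟨u, hu, h⟩ := exists_sub_mem_fiber_outerNormal hε.le hne hC hco hfr hV hν hL hτL hτ
      hx.1 hx.2
    exact ⟨u, (hV.insert 0).mem_toFinset.2 hu, h⟩
  calc μ (B + L) + μ A ≤ μ (interior B + L) + μ A := add_le_add_left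
        ((hco.add (convex_closedBall 0 ε)).addHaar_add_le_addHaar_interior_add μ hBint hL) _
    _ ≤ μ (A + L) + μ ((interior B + L) \ (A + L)) + μ A :=
        add_le_add_left (tsub_le_iff_left.1 le_measure_sdiff) _
    _ ≤ μ (A + L) + μ (B \ A) + μ A := by gcongr
    _ = μ (A + L) + μ B := by
        rw [add_assoc, ← measure_sdiff_add_inter B hA.measurableSet, inter_eq_right.2 hAB]

end Core

theorem V2_sub_le_of_volume_add_le {P Q R T : Set E2} (hP : volume P ≠ ⊤) (hQ : volume Q ≠ ⊤)
    (hR : volume R ≠ ⊤) (hT : volume T ≠ ⊤) (h : volume P + volume T ≤ volume Q + volume R) :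
    V2 P - V2 Q ≤ V2 R - V2 T := by
  rw [← ENNReal.toReal_le_toReal (ENNReal.add_ne_top.2 ⟨hP, hT⟩) (ENNReal.add_ne_top.2 ⟨hQ, hR⟩),
    ENNReal.toReal_add hP hT, ENNReal.toReal_add hQ hR] at h
  simp only [V2]
  linarith

theorem stmt_0 (ε : ℝ) (hε : 0 < ε)
    (S : Set E2) (hSne : S.Nonempty) (hSfin : S.Finite) (hSdiam : Metric.diam S ≤ 2 * ε)
    (K : Set E2) (hKne : K.Nonempty) (hKcomp : IsCompact K) (hKconv : Convex ℝ K)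
    (hKslide : SlidesFreely ε K) :
    V2 (convexHull ℝ S + K) - V2 (S + K) ≤
      V2 (convexHull ℝ S + closedBall (0 : E2) ε) - V2 (S + closedBall (0 : E2) ε) := by
  set L := innerParallelBody ε K
  have hC : IsCompact (convexHull ℝ S) := hSfin.isCompact_convexHull (𝕜 := ℝ)
  have hA : IsCompact (S + closedBall (0 : E2) ε) := hSfin.isCompact.add (isCompact_closedBall 0 ε)
  have hB : IsCompact (convexHull ℝ S + closedBall (0 : E2) ε) := hC.add (isCompact_closedBall 0 ε)
  have hL : IsCompact L := hKcomp.innerParallelBody hε.le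
  rw [eq_innerParallelBody_add_closedBall hε.le hKne hKcomp hKconv hKslide, add_comm L,
    ← add_assoc, ← add_assoc]
  refine V2_sub_le_of_volume_add_le (hB.add hL).measure_ne_top (hA.add hL).measure_ne_top
    hB.measure_ne_top hA.measure_ne_top ?_
  exact addHaar_add_add_le volume hε (hSne.mono (subset_convexHull ℝ S)) hC
    (convex_convexHull ℝ S) hA.isClosed (add_subset_add_right (subset_convexHull ℝ S))
    (frontier_convexHull_subset_add_closedBall hSfin hSdiam) hSfin.chordNormals
    (fun y hy => outerNormal_mem_chordNormals hSfin hSne hy.1 (not_or.1 hy.2).1 (not_or.1 hy.2).2)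
    (innerParallelBody_nonempty hKne hKcomp hKslide) hL hKconv.innerParallelBody

end
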